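/- arXiv:1907.12589 — 2 statements merged into one kernel-verified Lean document; each statement's English description precedes it below -/
import Mathlib

section
/- Fix b > 0. Then the ratio of the FAB p-value to the UMPU p-value diverges as z tends to negative infinity: p(z,b)/p(z,0) → ∞ as z → −∞. -/
open MeasureTheory ProbabilityTheory Filter

/-- Φ, the standard normal cumulative distribution function. -/
noncomputable def Phi : ℝ → ℝ := fun x => ProbabilityTheory.cdf (gaussianReal 0 1) x

/-- The FAB p-value function. -/
noncomputable def fabP (z b : ℝ) : ℝ := 1 - |Phi (z + b) - Phi (-z)|

open Set Real

/-! For `z ≤ -b` both absolute values in the FAB p-values open up and, by the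
symmetry `Φ (-z) = 1 - Φ z`, the ratio equals `(Φ z + Φ (z + b)) / (2 Φ z)`.
The density `φ` increases on `(-∞, 0]`, so `Φ (z + b) - Φ z ≥ b φ z`, while
Mills' inequality gives `-z Φ z ≤ φ z`; hence the ratio is at least `-z b / 2`. -/

noncomputable def phi (x : ℝ) : ℝ := (√(2 * π))⁻¹ * rexp (-x ^ 2 / 2)

lemma gaussianPDFReal_zero_one (x : ℝ) : gaussianPDFReal 0 1 x = phi x := by
  simp [gaussianPDFReal, phi]

lemma integrable_phi : Integrable phi := by
  simpa [funext gaussianPDFReal_zero_one] using integrable_gaussianPDFReal 0 1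

lemma hasDerivAt_phi (x : ℝ) : HasDerivAt phi (-x * phi x) x := by
  have hquad : HasDerivAt (fun y : ℝ => -y ^ 2 / 2) (-x) x :=
    ((hasDerivAt_pow 2 x).neg.div_const 2).congr_deriv (by ring)
  exact ((hquad.exp).const_mul (√(2 * π))⁻¹).congr_deriv (by simp only [phi]; ring)

lemma integrable_neg_mul_phi : Integrable fun x => -x * phi x := by
  have := (integrable_mul_exp_neg_mul_sq (b := 1 / 2) (by norm_num)).const_mul (-(√(2 * π))⁻¹)
  convert this using 2 with x
  simp only [phi]; ring_nf

lemma phi_pos (x : ℝ) : 0 < phi x := by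
  unfold phi; positivity

lemma monotoneOn_phi : MonotoneOn phi (Iic 0) := by
  intro s hs t ht hst
  simp only [mem_Iic] at hs ht
  exact mul_le_mul_of_nonneg_left (exp_le_exp.2 (by nlinarith)) (by positivity)

lemma Phi_eq_integral (x : ℝ) : Phi x = ∫ t in Iic x, phi t := by
  rw [Phi, cdf_eq_real, measureReal_def, gaussianReal_apply_eq_integral 0 one_ne_zero,
    ENNReal.toReal_ofReal (integral_nonneg fun t => gaussianPDFReal_nonneg 0 1 t)]
  simp only [gaussianPDFReal_zero_one]

lemma Phi_neg (x : ℝ) : Phi (-x) = 1 - Phi x := by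
  have hsymm : (gaussianReal 0 1).map (fun y => -y) = gaussianReal 0 1 := by
    simp [gaussianReal_map_neg]
  have hnull : gaussianReal 0 1 {x} = 0 :=
    gaussianReal_absolutelyContinuous 0 one_ne_zero volume_singleton
  simp only [Phi, cdf_eq_real]
  rw [← hsymm, map_measureReal_apply measurable_neg measurableSet_Iic, hsymm,
    ← probReal_compl_eq_one_sub measurableSet_Iic, compl_Iic]
  have hpre : (fun y : ℝ => -y) ⁻¹' Iic (-x) = Ici x := by ext; simp
  rw [hpre]
  exact measureReal_congr (Ioi_ae_eq_Ici' hnull).symm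


lemma monotone_Phi : Monotone Phi := monotone_cdf _

lemma mul_phi_le_Phi_sub {z w : ℝ} (hzw : z ≤ w) (hw : w ≤ 0) :
    (w - z) * phi z ≤ Phi w - Phi z := by
  rw [Phi_eq_integral, Phi_eq_integral,
    intervalIntegral.integral_Iic_sub_Iic integrable_phi.integrableOn integrable_phi.integrableOn,
    intervalIntegral.integral_of_le hzw]
  have := setIntegral_ge_of_const_le_real measurableSet_Ioc (by simp [Real.volume_Ioc])
    (fun t ht => monotoneOn_phi (hzw.trans hw) (ht.2.trans hw) ht.1.le)
    integrable_phi.integrableOn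
  simpa [Real.volume_Ioc, hzw, mul_comm] using this

lemma Phi_pos (x : ℝ) : 0 < Phi x := by
  set y := min x 0
  calc 0 < (y - (y - 1)) * phi (y - 1) := by rw [sub_sub_cancel, one_mul]; exact phi_pos _
    _ ≤ Phi y - Phi (y - 1) := mul_phi_le_Phi_sub (by linarith) (min_le_right _ _)
    _ ≤ Phi y := sub_le_self _ (cdf_nonneg _ _)
    _ ≤ Phi x := monotone_Phi (min_le_left _ _)

lemma integral_Iic_neg_mul_phi (z : ℝ) : ∫ t in Iic z, -t * phi t = phi z := by
  have hderiv : ∀ x ∈ Iic z, HasDerivAt phi (-x * phi x) x := fun x _ => hasDerivAt_phi x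
  have hlim := tendsto_zero_of_hasDerivAt_of_integrableOn_Iic hderiv
    integrable_neg_mul_phi.integrableOn integrable_phi.integrableOn
  simpa using integral_Iic_of_hasDerivAt_of_tendsto' hderiv integrable_neg_mul_phi.integrableOn hlim

lemma neg_mul_Phi_le_phi (z : ℝ) : -z * Phi z ≤ phi z := by
  rw [Phi_eq_integral, ← integral_const_mul, ← integral_Iic_neg_mul_phi z]
  refine setIntegral_mono_on (integrable_phi.integrableOn.const_mul _)
    integrable_neg_mul_phi.integrableOn measurableSet_Iic fun t ht => ?_
  exact mul_le_mul_of_nonneg_right (neg_le_neg ht) (phi_pos t).le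

lemma fabP_of_add_nonpos {z b : ℝ} (hb : 0 ≤ b) (hzb : z + b ≤ 0) :
    fabP z b = Phi z + Phi (z + b) := by
  have : Phi (z + b) ≤ Phi (-z) := monotone_Phi (by linarith)
  rw [fabP, abs_of_nonpos (by linarith), Phi_neg]
  ring

theorem stmt_9 (b : ℝ) (hb : 0 < b) :
    Tendsto (fun z : ℝ => fabP z b / fabP z 0) atBot atTop := by
  refine tendsto_atTop_mono' atBot ?_ (tendsto_neg_atBot_atTop.atTop_mul_const (half_pos hb))
  filter_upwards [eventually_le_atBot (-b)] with z hz
  have hmills : b * (-z * Phi z) ≤ b * phi z :=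
    mul_le_mul_of_nonneg_left (neg_mul_Phi_le_phi z) hb.le
  have hincr := mul_phi_le_Phi_sub (z := z) (w := z + b) (by linarith) (by linarith)
  rw [fabP_of_add_nonpos hb.le (by linarith), fabP_of_add_nonpos le_rfl (by linarith), add_zero,
    le_div_iff₀ (by linarith [Phi_pos z])]
  linarith [Phi_pos z, Phi_pos (z + b)]
end

section
/- The FAB p-value function is strictly decreasing in the distance of z from −b/2: for all b ∈ ℝ and all z₁, z₂ ∈ ℝ with |z₁ + b/2| < |z₂ + b/2|, one has p(z₂, b) < p(z₁, b). In particular p(z,b) attains its maximum value 1 uniquely at z = −b/2. -/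
open MeasureTheory ProbabilityTheory

/-!
Put `c = b / 2` and `s = z + c`. Then `p(z, b) = 1 - |Φ(c + s) - Φ(c - s)|`, and since `Φ` is strictly
increasing, `g(s) = Φ(c + s) - Φ(c - s)` is strictly increasing and odd, so `|g(s)| = g(|s|)` is strictly
increasing in `|s| = |z + b/2|`, and vanishes exactly at `s = 0`.
-/

lemma strictMono_cdf_of_absolutelyContinuous (μ : Measure ℝ) [IsProbabilityMeasure μ]
    (hμ : (volume : Measure ℝ) ≪ μ) : StrictMono (cdf μ) := by
  intro x y hxy
  have hpos : μ (Set.Ioc x y) ≠ 0 := fun h ↦ by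
    simpa [Real.volume_Ioc, hxy.not_ge] using hμ h
  rw [← measure_cdf μ, StieltjesFunction.measure_Ioc, Ne, ENNReal.ofReal_eq_zero, not_le] at hpos
  linarith

lemma Phi_strictMono : StrictMono Phi :=
  strictMono_cdf_of_absolutelyContinuous _ (gaussianReal_absolutelyContinuous' 0 one_ne_zero)

section

variable {α β : Type*} [AddCommGroup α] [LinearOrder α] [IsOrderedAddMonoid α] [AddCommGroup β]

lemma StrictMono.sub_reflect [PartialOrder β] [IsOrderedAddMonoid β] {f : α → β}
    (hf : StrictMono f) (c : α) : StrictMono fun t ↦ f (c + t) - f (c - t) := fun _ _ h ↦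
  sub_lt_sub (hf (add_lt_add_right h c)) (hf (sub_lt_sub_left h c))

lemma StrictMono.abs_sub_reflect [LinearOrder β] [IsOrderedAddMonoid β] {f : α → β}
    (hf : StrictMono f) (c t : α) : |f (c + t) - f (c - t)| = f (c + |t|) - f (c - |t|) := by
  rcases le_total 0 t with ht | ht
  · rw [abs_of_nonneg ht, abs_of_nonneg]
    simpa using (hf.sub_reflect c).monotone ht
  · rw [abs_of_nonpos ht, abs_of_nonpos, neg_sub, sub_neg_eq_add, ← sub_eq_add_neg]
    simpa using (hf.sub_reflect c).monotone ht

end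

lemma fabP_eq (z b : ℝ) :
    fabP z b = 1 - (Phi (b / 2 + |z + b / 2|) - Phi (b / 2 - |z + b / 2|)) := by
  rw [fabP, ← Phi_strictMono.abs_sub_reflect]
  ring_nf

theorem stmt_16 (b : ℝ) :
    (∀ z₁ z₂ : ℝ, |z₁ + b / 2| < |z₂ + b / 2| → fabP z₂ b < fabP z₁ b) ∧
      fabP (-b / 2) b = 1 ∧ ∀ z : ℝ, z ≠ -b / 2 → fabP z b < 1 := by
  have hdecr : ∀ z₁ z₂ : ℝ, |z₁ + b / 2| < |z₂ + b / 2| → fabP z₂ b < fabP z₁ b := by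
    intro z₁ z₂ h
    simpa [fabP_eq] using Phi_strictMono.sub_reflect (b / 2) h
  have hmax : fabP (-b / 2) b = 1 := by simp [fabP_eq, neg_div]
  refine ⟨hdecr, hmax, fun z hz ↦ hmax ▸ hdecr _ _ ?_⟩
  rw [neg_div, neg_add_cancel, abs_zero, abs_pos]
  exact fun h ↦ hz (by linarith)
end
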